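/- arXiv:0711.0094 — 2 statements merged into one kernel-verified Lean document; each statement's English description precedes it below -/
import Mathlib

section
/- The theta function satisfies the heat equation: for every τ ∈ H_g, z ∈ ℂ^g and indices 1 ≤ j,k ≤ g, the second partial derivative ∂²θ/∂z_j∂z_k(τ,z) (differentiating in the j-th and k-th coordinates of z) equals 2πi times the derivative at s = 0 of the one-complex-variable map s ↦ θ(τ + s(E_{jk} + E_{kj}), z), where E_{jk} is the elementary g×g matrix with 1 in position (j,k) and 0 elsewhere. (In classical symmetric coordinates τ_{jk} = τ_{kj} this reads ∂²θ/∂z_j∂z_k = 2πi(1+δ_{jk}) ∂θ/∂τ_{jk}, with δ the Kronecker symbol.) -/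
open scoped Matrix
open Matrix

/-- The Riemann theta function `θ(τ,z) = ∑_{n ∈ ℤ^g} exp(πi(nᵀτn + 2nᵀz))`. -/
noncomputable def riemannTheta (g : ℕ) (τ : Matrix (Fin g) (Fin g) ℂ) (z : Fin g → ℂ) : ℂ :=
  ∑' n : Fin g → ℤ,
    Complex.exp ((Real.pi : ℂ) * Complex.I *
      ((fun i => (n i : ℂ)) ⬝ᵥ τ.mulVec (fun i => (n i : ℂ)) +
        2 * ((fun i => (n i : ℂ)) ⬝ᵥ z)))

/-!
The `n`-th term of the theta series is the exponential of a function that is affine in each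
coordinate `z_l` (slope `2πi n_l`) and in `s` along `τ + s(E_{jk} + E_{kj})` (slope
`2πi n_j n_k`). Differentiating termwise, `∂_j ∂_k` brings down `(2πi)² n_j n_k`, which is `2πi`
times what `d/ds` brings down. Termwise differentiation is legitimate because positivity of
`Im τ` gives the Gaussian bound `Re(exponent) ≤ -a‖n‖² + b‖n‖`, which beats every polynomial
weight; as all series are holomorphic in the variable being differentiated, bounding the terms
themselves on a disc suffices (Weierstrass).
-/

open Real Finset Complex

theorem summable_fin_pi_prod {α : Type*} {f : α → ℝ} (hf₀ : ∀ a, 0 ≤ f a) (hf : Summable f) :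
    ∀ g : ℕ, Summable fun n : Fin g → α => ∏ i, f (n i)
  | 0 => .of_finite
  | g + 1 => by
    refine (Fin.consEquiv fun _ => α).summable_iff.mp ?_
    refine ((hf.mul_of_nonneg (summable_fin_pi_prod hf₀ hf g) hf₀
      fun _ => prod_nonneg fun i _ => hf₀ _)).congr fun p => ?_
    simp [Fin.consEquiv, Fin.prod_univ_succ]

theorem summable_exp_neg_mul_norm_int {δ : ℝ} (hδ : 0 < δ) :
    Summable fun m : ℤ => rexp (-δ * ‖m‖) := by
  have h : Summable fun m : ℕ => rexp (m * -δ) := summable_exp_nat_mul_iff.mpr (by linarith)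
  refine .of_nat_of_neg (h.congr fun m => ?_) (h.congr fun m => ?_) <;> simp [mul_comm]

theorem summable_exp_neg_mul_norm_fin_int {g : ℕ} {δ : ℝ} (hδ : 0 < δ) :
    Summable fun n : Fin g → ℤ => rexp (-δ * ‖n‖) := by
  have hδ' : 0 < δ / (g + 1) := by positivity
  refine .of_nonneg_of_le (fun _ => (exp_pos _).le) (fun n => ?_)
    (summable_fin_pi_prod (fun _ => (exp_pos _).le) (summable_exp_neg_mul_norm_int hδ') g)
  rw [← Real.exp_sum, exp_le_exp, ← mul_sum]
  have hsum : ∑ i, ‖n i‖ ≤ (g + 1) * ‖n‖ :=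
    calc ∑ i, ‖n i‖ ≤ ∑ _i : Fin g, ‖n‖ := sum_le_sum fun i _ => norm_le_pi_norm n i
      _ = g * ‖n‖ := by rw [sum_const, card_univ, Fintype.card_fin, nsmul_eq_mul]
      _ ≤ (g + 1) * ‖n‖ := by gcongr; linarith
  have hcancel : δ / (g + 1) * ((g + 1) * ‖n‖) = δ * ‖n‖ := by field_simp
  nlinarith [mul_le_mul_of_nonneg_left hsum hδ'.le]

theorem neg_mul_sq_add_mul_le {a : ℝ} (ha : 0 < a) (b x : ℝ) :
    -a * x ^ 2 + b * x ≤ b ^ 2 / (4 * a) := by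
  rw [le_div_iff₀ (by positivity)]
  nlinarith [sq_nonneg (2 * a * x - b)]

theorem pow_mul_exp_neg_sq_le {a : ℝ} (ha : 0 < a) (b : ℝ) (k : ℕ) {x : ℝ} (hx : 0 ≤ x) :
    x ^ k * rexp (-a * x ^ 2 + b * x) ≤
      k.factorial * rexp ((b + 2) ^ 2 / (4 * a)) * rexp (-x) := by
  have hpow : x ^ k ≤ k.factorial * rexp x := by
    have := Real.pow_div_factorial_le_exp x hx k
    rwa [div_le_iff₀ (by positivity), mul_comm] at this
  calc x ^ k * rexp (-a * x ^ 2 + b * x)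
      ≤ k.factorial * rexp x * rexp (-a * x ^ 2 + b * x) := by gcongr
    _ = k.factorial * rexp (-a * x ^ 2 + (b + 2) * x) * rexp (-x) := by
      rw [mul_assoc, mul_assoc, ← Real.exp_add, ← Real.exp_add]; ring_nf
    _ ≤ k.factorial * rexp ((b + 2) ^ 2 / (4 * a)) * rexp (-x) := by
      gcongr; exact neg_mul_sq_add_mul_le ha _ _

theorem summable_pow_mul_exp_neg_sq_fin_int {g : ℕ} {a : ℝ} (ha : 0 < a) (b : ℝ) (k : ℕ) :
    Summable fun n : Fin g → ℤ => ‖n‖ ^ k * rexp (-a * ‖n‖ ^ 2 + b * ‖n‖) := by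
  refine .of_nonneg_of_le (fun _ => by positivity)
    (fun n => pow_mul_exp_neg_sq_le ha b k (norm_nonneg n)) ?_
  simpa using (summable_exp_neg_mul_norm_fin_int one_pos).mul_left _

theorem norm_intCast_pi {ι : Type*} [Fintype ι] (n : ι → ℤ) :
    ‖fun i => (n i : ℝ)‖ = ‖n‖ := by
  refine le_antisymm ((pi_norm_le_iff_of_nonneg (norm_nonneg _)).2 fun i => ?_)
    ((pi_norm_le_iff_of_nonneg (norm_nonneg _)).2 fun i => ?_)
  · rw [Int.norm_cast_real]; exact norm_le_pi_norm n i
  · rw [← Int.norm_cast_real]; exact norm_le_pi_norm (fun i => (n i : ℝ)) i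

theorem Matrix.PosDef.exists_mul_norm_sq_le {ι : Type*} [Fintype ι] {Y : Matrix ι ι ℝ}
    (hY : Y.PosDef) : ∃ c > 0, ∀ x : ι → ℝ, c * ‖x‖ ^ 2 ≤ x ⬝ᵥ Y *ᵥ x := by
  rcases isEmpty_or_nonempty ι with hι | hι
  · exact ⟨1, one_pos, fun x => by simp [Subsingleton.elim x 0]⟩
  have hq : Continuous fun x : ι → ℝ => x ⬝ᵥ Y *ᵥ x := by
    simp only [dotProduct, mulVec]; fun_prop
  obtain ⟨x₀, hx₀, hmin⟩ := (isCompact_sphere (0 : ι → ℝ) 1).exists_isMinOn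
    (NormedSpace.sphere_nonempty.mpr zero_le_one) hq.continuousOn
  have hx₀ : x₀ ≠ 0 := ne_zero_of_mem_unit_sphere ⟨x₀, hx₀⟩
  refine ⟨x₀ ⬝ᵥ Y *ᵥ x₀, by simpa using hY.dotProduct_mulVec_pos hx₀, fun x => ?_⟩
  rcases eq_or_ne x 0 with rfl | hx
  · simp
  have hxn : 0 < ‖x‖ := norm_pos_iff.mpr hx
  have hmem : ‖x‖⁻¹ • x ∈ Metric.sphere (0 : ι → ℝ) 1 := by
    simp [norm_smul, hxn.ne']
  have hle : x₀ ⬝ᵥ Y *ᵥ x₀ ≤ ‖x‖⁻¹ * (‖x‖⁻¹ * (x ⬝ᵥ Y *ᵥ x)) := by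
    simpa [smul_dotProduct, mulVec_smul, dotProduct_smul] using hmin hmem
  calc x₀ ⬝ᵥ Y *ᵥ x₀ * ‖x‖ ^ 2 ≤ ‖x‖⁻¹ * (‖x‖⁻¹ * (x ⬝ᵥ Y *ᵥ x)) * ‖x‖ ^ 2 := by gcongr
    _ = x ⬝ᵥ Y *ᵥ x := by field_simp

theorem deriv_tsum_mul_cexp_affine {ι : Type*} {a b c : ι → ℂ} {r : ℝ}
    (hsum : Summable fun i => ‖c i‖ * rexp ((a i).re + ‖b i‖ * r)) {s : ℂ} (hs : ‖s‖ < r) :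
    deriv (fun w => ∑' i, c i * cexp (a i + b i * w)) s =
      ∑' i, c i * b i * cexp (a i + b i * s) := by
  have hterm : ∀ i, HasDerivAt (fun w => c i * cexp (a i + b i * w))
      (c i * b i * cexp (a i + b i * s)) s := fun i => by
    simpa [mul_comm, mul_left_comm, mul_assoc] using
      (((hasDerivAt_id s).const_mul (b i)).const_add (a i)).cexp.const_mul (c i)
  have hbound : ∀ i, ∀ w ∈ Metric.ball (0 : ℂ) r,
      ‖c i * cexp (a i + b i * w)‖ ≤ ‖c i‖ * rexp ((a i).re + ‖b i‖ * r) := by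
    intro i w hw
    rw [norm_mul, norm_exp, add_re]
    have hw : ‖w‖ ≤ r := by simpa using (Metric.mem_ball.mp hw).le
    gcongr
    calc (b i * w).re ≤ ‖b i * w‖ := re_le_norm _
      _ ≤ ‖b i‖ * r := by rw [norm_mul]; gcongr
  have hdiff : ∀ i, DifferentiableOn ℂ (fun w => c i * cexp (a i + b i * w)) (Metric.ball 0 r) :=
    fun i => (((differentiable_id.const_mul (b i)).const_add (a i)).cexp.const_mul (c i))
      |>.differentiableOn
  rw [← (hasSum_deriv_of_summable_norm hsum hdiff Metric.isOpen_ball hbound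
    (by simpa using hs)).tsum_eq]
  exact tsum_congr fun i => (hterm i).deriv

theorem norm_two_pi_I_mul_intCast (m : ℤ) : ‖2 * π * I * m‖ = 2 * π * ‖m‖ := by
  simp [abs_of_pos pi_pos, Int.norm_eq_abs]

theorem norm_two_pi_I_mul_intCast_apply_le {g : ℕ} (n : Fin g → ℤ) (k : Fin g) :
    ‖2 * π * I * n k‖ ≤ 2 * π * ‖n‖ := by
  rw [norm_two_pi_I_mul_intCast]
  gcongr
  exact norm_le_pi_norm n k

section Theta

variable {g : ℕ}

noncomputable def thetaExponent (τ : Matrix (Fin g) (Fin g) ℂ) (z : Fin g → ℂ)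
    (n : Fin g → ℤ) : ℂ :=
  π * I * ((fun i => (n i : ℂ)) ⬝ᵥ τ *ᵥ (fun i => (n i : ℂ)) + 2 * ((fun i => (n i : ℂ)) ⬝ᵥ z))

theorem riemannTheta_eq_tsum_cexp_thetaExponent (τ : Matrix (Fin g) (Fin g) ℂ)
    (z : Fin g → ℂ) : riemannTheta g τ z = ∑' n, cexp (thetaExponent τ z n) := rfl

theorem thetaExponent_add_smul_single (τ : Matrix (Fin g) (Fin g) ℂ) (z : Fin g → ℂ)
    (n : Fin g → ℤ) (k : Fin g) (t : ℂ) :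
    thetaExponent τ (z + t • Pi.single k 1) n = thetaExponent τ z n + 2 * π * I * n k * t := by
  simp only [thetaExponent, dotProduct_add, dotProduct_smul, dotProduct_single, smul_eq_mul,
    mul_one]
  ring

theorem thetaExponent_add_smul_single_add_single (τ : Matrix (Fin g) (Fin g) ℂ)
    (z : Fin g → ℂ) (n : Fin g → ℤ) (j k : Fin g) (s : ℂ) :
    thetaExponent (τ + s • (single j k 1 + single k j 1)) z n =
      thetaExponent τ z n + 2 * π * I * (n j * n k) * s := by
  simp only [thetaExponent, add_mulVec, smul_mulVec, dotProduct_add, dotProduct_smul,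
    single_mulVec_eq, dotProduct_single, smul_eq_mul, one_mul, mul_one]
  ring

theorem re_thetaExponent (τ : Matrix (Fin g) (Fin g) ℂ) (z : Fin g → ℂ) (n : Fin g → ℤ) :
    (thetaExponent τ z n).re = -π * ((fun i => (n i : ℝ)) ⬝ᵥ
      (of fun i j => (τ i j).im) *ᵥ (fun i => (n i : ℝ)) + 2 * ∑ i, n i * (z i).im) := by
  simp [thetaExponent, dotProduct, mulVec, mul_re, mul_im, mul_sum]

theorem exists_re_thetaExponent_le {τ : Matrix (Fin g) (Fin g) ℂ}
    (hpos : (of fun i j => (τ i j).im).PosDef) (z : Fin g → ℂ) :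
    ∃ a > 0, ∃ b, ∀ n : Fin g → ℤ, (thetaExponent τ z n).re ≤ -a * ‖n‖ ^ 2 + b * ‖n‖ := by
  obtain ⟨c, hc, hq⟩ := hpos.exists_mul_norm_sq_le
  refine ⟨π * c, by positivity, 2 * π * ∑ i, ‖z i‖, fun n => ?_⟩
  have hquad := hq fun i => (n i : ℝ)
  rw [norm_intCast_pi] at hquad
  have hlin : -(‖n‖ * ∑ i, ‖z i‖) ≤ ∑ i, n i * (z i).im := by
    rw [mul_sum, ← sum_neg_distrib]
    refine sum_le_sum fun i _ => ?_
    calc -(‖n‖ * ‖z i‖) ≤ -|n i * (z i).im| := by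
          rw [abs_mul]
          gcongr
          · rw [← Real.norm_eq_abs, Int.norm_cast_real]; exact norm_le_pi_norm n i
          · exact abs_im_le_norm _
      _ ≤ n i * (z i).im := neg_abs_le _
  rw [re_thetaExponent]
  nlinarith [pi_pos]

theorem deriv_tsum_mul_cexp_thetaExponent_add_smul_single {τ : Matrix (Fin g) (Fin g) ℂ}
    (hpos : (of fun i j => (τ i j).im).PosDef) {c : (Fin g → ℤ) → ℂ} {C : ℝ} {m : ℕ}
    (hc : ∀ n, ‖c n‖ ≤ C * ‖n‖ ^ m) (z : Fin g → ℂ) (k : Fin g) :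
    deriv (fun t : ℂ => ∑' n, c n * cexp (thetaExponent τ (z + t • Pi.single k 1) n)) 0 =
      ∑' n, c n * (2 * π * I * n k) * cexp (thetaExponent τ z n) := by
  obtain ⟨a, ha, b, hre⟩ := exists_re_thetaExponent_le hpos z
  have hsum : Summable fun n : Fin g → ℤ =>
      ‖c n‖ * rexp ((thetaExponent τ z n).re + ‖2 * π * I * n k‖ * 1) := by
    refine .of_nonneg_of_le (fun _ => by positivity) (fun n => ?_)
      ((summable_pow_mul_exp_neg_sq_fin_int ha (b + 2 * π) m).mul_left C)
    have hexp : (thetaExponent τ z n).re + ‖2 * π * I * n k‖ * 1 ≤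
        -a * ‖n‖ ^ 2 + (b + 2 * π) * ‖n‖ := by
      linarith [hre n, norm_two_pi_I_mul_intCast_apply_le n k]
    rw [← mul_assoc]
    exact mul_le_mul (hc n) (exp_le_exp.mpr hexp) (by positivity) ((norm_nonneg _).trans (hc n))
  simp_rw [thetaExponent_add_smul_single]
  simpa using deriv_tsum_mul_cexp_affine hsum (s := 0) (by simp)

theorem deriv_riemannTheta_add_smul_single_add_single {τ : Matrix (Fin g) (Fin g) ℂ}
    (hpos : (of fun i j => (τ i j).im).PosDef) (z : Fin g → ℂ) (j k : Fin g) :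
    deriv (fun s : ℂ => riemannTheta g (τ + s • (single j k 1 + single k j 1)) z) 0 =
      ∑' n, 2 * π * I * (n j * n k) * cexp (thetaExponent τ z n) := by
  obtain ⟨a, ha, b, hre⟩ := exists_re_thetaExponent_le hpos z
  -- the disc radius `a / (4π)` keeps the perturbation of `Im τ` within half the Gaussian decay
  have hsum : Summable fun n : Fin g → ℤ => ‖(1 : ℂ)‖ *
      rexp ((thetaExponent τ z n).re + ‖2 * π * I * (n j * n k)‖ * (a / (4 * π))) := by
    refine .of_nonneg_of_le (fun _ => by positivity) (fun n => ?_)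
      (summable_pow_mul_exp_neg_sq_fin_int (half_pos ha) b 0)
    have hjk : ‖2 * π * I * (n j * n k)‖ ≤ 2 * π * ‖n‖ ^ 2 := by
      rw [← Int.cast_mul, norm_two_pi_I_mul_intCast, norm_mul, sq]
      gcongr <;> exact norm_le_pi_norm n _
    have hquad : ‖2 * π * I * (n j * n k)‖ * (a / (4 * π)) ≤ a / 2 * ‖n‖ ^ 2 :=
      calc _ ≤ 2 * π * ‖n‖ ^ 2 * (a / (4 * π)) := by gcongr
        _ = a / 2 * ‖n‖ ^ 2 := by field_simp; ring
    rw [norm_one, one_mul, pow_zero, one_mul, exp_le_exp]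
    linarith [hre n]
  simp_rw [riemannTheta_eq_tsum_cexp_thetaExponent, thetaExponent_add_smul_single_add_single]
  simpa using deriv_tsum_mul_cexp_affine hsum (s := 0) (by simp; positivity)

end Theta

theorem riemannTheta_heat_equation_general (g : ℕ)
    (τ : Matrix (Fin g) (Fin g) ℂ)
    (hpos : (Matrix.of fun i j => (τ i j).im).PosDef)
    (z : Fin g → ℂ) (j k : Fin g) :
    deriv (fun s : ℂ => deriv (fun t : ℂ =>
        riemannTheta g τ (z + s • (Pi.single j 1 : Fin g → ℂ) + t • (Pi.single k 1 : Fin g → ℂ))) 0) 0 =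
      2 * (Real.pi : ℂ) * Complex.I *
        deriv (fun s : ℂ =>
          riemannTheta g
            (τ + s • (Matrix.single j k 1 + Matrix.single k j 1)) z) 0 := by
  have hinner : ∀ s : ℂ, deriv (fun t : ℂ =>
      riemannTheta g τ (z + s • (Pi.single j 1 : Fin g → ℂ) + t • (Pi.single k 1 : Fin g → ℂ))) 0 =
      ∑' n, 2 * π * I * n k * cexp (thetaExponent τ (z + s • Pi.single j 1) n) := fun s => by
    simpa [riemannTheta_eq_tsum_cexp_thetaExponent] using
      deriv_tsum_mul_cexp_thetaExponent_add_smul_single hpos (c := 1) (C := 1) (m := 0)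
        (by simp) (z + s • Pi.single j 1) k
  rw [funext hinner, deriv_tsum_mul_cexp_thetaExponent_add_smul_single hpos (m := 1)
      (by simpa using norm_two_pi_I_mul_intCast_apply_le · k) z j,
    deriv_riemannTheta_add_smul_single_add_single hpos, ← tsum_mul_left]
  congr 1; ext n; ring

/-- The heat equation for the theta function: for `τ` in the Siegel upper half-space,
`z ∈ ℂ^g` and `1 ≤ j,k ≤ g`, the second partial derivative `∂²θ/∂z_j∂z_k (τ,z)` equals
`2πi` times the derivative at `s = 0` of `s ↦ θ(τ + s(E_{jk} + E_{kj}), z)`, where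
`E_{jk}` is the elementary matrix. -/
theorem riemannTheta_heat_equation (g : ℕ)
    (τ : Matrix (Fin g) (Fin g) ℂ) (hsym : τ.IsSymm)
    (hpos : (Matrix.of fun i j => (τ i j).im).PosDef)
    (z : Fin g → ℂ) (j k : Fin g) :
    deriv (fun s : ℂ => deriv (fun t : ℂ =>
        riemannTheta g τ (z + s • (Pi.single j 1 : Fin g → ℂ) + t • (Pi.single k 1 : Fin g → ℂ))) 0) 0 =
      2 * (Real.pi : ℂ) * Complex.I *
        deriv (fun s : ℂ =>
          riemannTheta g
            (τ + s • (Matrix.single j k 1 + Matrix.single k j 1)) z) 0 :=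
  riemannTheta_heat_equation_general g τ hpos z j k
end

section
/- Fix g ≥ 2 and m ≥ 1, and let ε = (ε₁, ε₂) where ε₁ ∈ [0,1) with mε₁ ∈ ℤ and ε₂ ∈ [0,1)^{g-1} with mε₂ ∈ ℤ^{g-1}. Fix τ ∈ H_{g-1} and w ∈ ℂ^{g-1}, and for t > 0 let σ(t) denote the symmetric g×g block matrix with upper-left 1×1 entry it, upper-right block wᵀ, lower-left block w, and lower-right block τ. Then the order-m theta constant degenerates as: lim_{t→+∞} Θ[(ε₁,ε₂)](σ(t)) = Θ[ε₂](τ) if ε₁ = 0, and = 0 if ε₁ ≠ 0. -/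
open scoped Matrix
open Matrix

/-- The order-`m` theta constant with characteristic `ε`:
`Θ[ε](σ) = ∑_{n ∈ ℤ^ι} exp(πi m (n+ε)ᵀσ(n+ε))`. -/
noncomputable def thetaConst (ι : Type) [Fintype ι] (m : ℕ) (ε : ι → ℝ)
    (σ : Matrix ι ι ℂ) : ℂ :=
  ∑' n : ι → ℤ,
    Complex.exp ((Real.pi : ℂ) * Complex.I * (m : ℂ) *
      ((fun i => (n i : ℂ) + (ε i : ℂ)) ⬝ᵥ σ.mulVec (fun i => (n i : ℂ) + (ε i : ℂ))))

/-- The degenerating `g × g` block period matrix `σ(t) = (it, wᵀ; w, τ)`. -/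
noncomputable def degenMatrix (g : ℕ) (τ : Matrix (Fin (g - 1)) (Fin (g - 1)) ℂ)
    (w : Fin (g - 1) → ℂ) (t : ℝ) :
    Matrix (Fin 1 ⊕ Fin (g - 1)) (Fin 1 ⊕ Fin (g - 1)) ℂ :=
  Matrix.fromBlocks (Matrix.of fun _ _ => (t : ℂ) * Complex.I)
    (Matrix.of fun _ j => w j) (Matrix.of fun i _ => w i) τ

/-!
Index the theta series of `σ(t)` by `n = (k, v) ∈ ℤ × ℤ^{g-1}` and put `x = k + ε₁`. The summand
equals `exp(-π m t x²)` times a factor independent of `t`, so it tends to the summand of `Θ[ε₂](τ)`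
at `v` when `x = 0` and to `0` otherwise; since `0 ≤ ε₁ < 1`, `x = 0` happens only for `k = 0`
and `ε₁ = 0`. Limit and sum may be interchanged by dominated convergence: as `Im τ` is positive
definite, `Im σ(t)` is bounded below by a fixed multiple `δ` of the identity for all large `t`,
so every summand is bounded by the summable Gaussian `exp(-π m δ ‖n + ε‖²)`.
-/

open Complex Filter Topology Real

lemma summable_exp_neg_mul_add_sq {a : ℝ} (ha : 0 < a) (e : ℝ) :
    Summable fun n : ℤ => rexp (-(a * (n + e) ^ 2)) :=
  (HurwitzKernelBounds.summable_f_int 0 e (div_pos ha pi_pos)).congr fun n => by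
    simp only [HurwitzKernelBounds.f_int, pow_zero, one_mul]
    congr 1
    field_simp

section

variable {ι : Type*}

def borderedMatrix {R : Type*} (a : R) (b : ι → R) (D : Matrix ι ι R) :
    Matrix (Fin 1 ⊕ ι) (Fin 1 ⊕ ι) R :=
  fromBlocks (of fun _ _ => a) (of fun _ j => b j) (of fun i _ => b i) D

lemma borderedMatrix_map {R S : Type*} (f : R → S) (a : R) (b : ι → R) (D : Matrix ι ι R) :
    (borderedMatrix a b D).map f = borderedMatrix (f a) (fun j => f (b j)) (D.map f) := by
  rw [borderedMatrix, borderedMatrix, fromBlocks_map]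
  rfl

lemma tsum_ite_inl_add_eq_zero {α : Type*} [AddCommMonoid α] [TopologicalSpace α] {e : ℝ}
    (he₀ : 0 ≤ e) (he₁ : e < 1) (f : (ι → ℤ) → α) :
    ∑' n : Fin 1 ⊕ ι → ℤ, (if (n (.inl 0) : ℝ) + e = 0 then f (fun j => n (.inr j)) else 0) =
      if e = 0 then ∑' v, f v else 0 := by
  have hzero : ∀ k : ℤ, (k : ℝ) + e = 0 ↔ k = 0 ∧ e = 0 := by
    refine fun k => ⟨fun h => ?_, fun ⟨hk, he⟩ => by simp [hk, he]⟩
    have hk : k = 0 := by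
      have h₁ : (-1 : ℤ) < k := by exact_mod_cast (by linarith : (-1 : ℝ) < k)
      have h₂ : k ≤ 0 := by exact_mod_cast (by linarith : (k : ℝ) ≤ 0)
      omega
    exact ⟨hk, by simpa [hk] using h⟩
  split_ifs with he
  · let g : (ι → ℤ) → Fin 1 ⊕ ι → ℤ := Sum.elim 0
    have hg : Function.Injective g := fun v v' h => funext fun j => congrFun h (.inr j)
    rw [← hg.tsum_eq]
    · simp [g, he]
    · intro n hn
      have hn₀ : n (.inl 0) = 0 := by_contra fun h => hn (by simp [hzero, h])
      refine ⟨fun j => n (.inr j), funext fun i => ?_⟩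
      rcases i with i | j
      · simp [g, Fin.fin_one_eq_zero i, hn₀]
      · rfl
  · simp [hzero, he]

variable [Fintype ι]

lemma summable_pi_prod_of_nonneg {κ : ι → Type*} {f : ∀ i, κ i → ℝ}
    (hf₀ : ∀ i k, 0 ≤ f i k) (hf : ∀ i, Summable (f i)) :
    Summable fun v : (∀ i, κ i) => ∏ i, f i (v i) := by
  classical
  refine summable_of_sum_le (c := ∏ i, ∑' k, f i k)
    (fun v => Finset.prod_nonneg fun i _ => hf₀ i _) fun s => ?_
  calc ∑ v ∈ s, ∏ i, f i (v i)
      ≤ ∑ v ∈ Fintype.piFinset fun i => s.image (· i), ∏ i, f i (v i) :=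
        Finset.sum_le_sum_of_subset_of_nonneg
          (fun v hv => Fintype.mem_piFinset.2 fun i => Finset.mem_image_of_mem _ hv)
          fun v _ _ => Finset.prod_nonneg fun i _ => hf₀ i _
    _ = ∏ i, ∑ k ∈ s.image (· i), f i k := (Finset.prod_univ_sum _ _).symm
    _ ≤ ∏ i, ∑' k, f i k := Finset.prod_le_prod (fun i _ => Finset.sum_nonneg fun k _ => hf₀ i k)
        fun i _ => (hf i).sum_le_tsum _ fun k _ => hf₀ i k

lemma summable_exp_neg_mul_sum_add_sq {a : ℝ} (ha : 0 < a) (e : ι → ℝ) :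
    Summable fun n : ι → ℤ => rexp (-(a * ∑ i, (n i + e i) ^ 2)) := by
  refine (summable_pi_prod_of_nonneg (fun i k => (exp_pos _).le)
    fun i => summable_exp_neg_mul_add_sq ha (e i)).congr fun n => ?_
  rw [← Real.exp_sum, Finset.mul_sum, ← Finset.sum_neg_distrib]

lemma Matrix.PosDef.exists_pos_mul_sum_sq_le {A : Matrix ι ι ℝ} (hA : A.PosDef) :
    ∃ c, 0 < c ∧ ∀ y, c * ∑ i, y i ^ 2 ≤ y ⬝ᵥ A *ᵥ y := by
  rcases isEmpty_or_nonempty ι with _ | _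
  · exact ⟨1, one_pos, fun y => by simp⟩
  let Q : EuclideanSpace ℝ ι → ℝ := fun y => y.ofLp ⬝ᵥ A *ᵥ y.ofLp
  have hQ : Continuous Q := by fun_prop
  obtain ⟨u, hu, hmin⟩ := (isCompact_sphere (0 : EuclideanSpace ℝ ι) 1).exists_isMinOn
    (NormedSpace.sphere_nonempty.2 zero_le_one) hQ.continuousOn
  have hu₀ : u.ofLp ≠ 0 := fun h => by simp_all
  refine ⟨Q u, by simpa using hA.dotProduct_mulVec_pos hu₀, fun y => ?_⟩
  rcases eq_or_ne y 0 with rfl | hy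
  · simp
  set s := ‖WithLp.toLp 2 y‖
  have hs : 0 < s := norm_pos_iff.2 (by simpa using hy)
  have hsum : ∑ i, y i ^ 2 = s ^ 2 := by simp [s, EuclideanSpace.real_norm_sq_eq]
  have hmem : s⁻¹ • WithLp.toLp 2 y ∈ Metric.sphere (0 : EuclideanSpace ℝ ι) 1 := by
    simp [norm_smul, s, hs.ne']
  have hscale : Q (s⁻¹ • WithLp.toLp 2 y) = (s ^ 2)⁻¹ * (y ⬝ᵥ A *ᵥ y) := by
    simp [Q, mulVec_smul, sq, mul_assoc]
  have hmin' : Q u ≤ (s ^ 2)⁻¹ * (y ⬝ᵥ A *ᵥ y) := hscale ▸ hmin hmem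
  rw [hsum, mul_comm]
  exact (le_inv_mul_iff₀ (by positivity)).1 hmin'

lemma dotProduct_borderedMatrix_mulVec {R : Type*} [CommSemiring R] (a : R) (b : ι → R)
    (D : Matrix ι ι R) (v : Fin 1 ⊕ ι → R) :
    v ⬝ᵥ borderedMatrix a b D *ᵥ v = a * v (.inl 0) ^ 2
      + 2 * v (.inl 0) * (b ⬝ᵥ fun j => v (.inr j))
      + (fun j => v (.inr j)) ⬝ᵥ D *ᵥ fun j => v (.inr j) := by
  simp only [borderedMatrix, dotProduct, mulVec, Fintype.sum_sum_type, fromBlocks_apply₁₁,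
    fromBlocks_apply₁₂, fromBlocks_apply₂₁, fromBlocks_apply₂₂, of_apply, Fin.sum_univ_one,
    mul_add, Finset.sum_add_distrib]
  have hcross : ∑ i, v (.inr i) * (b i * v (.inl 0)) = v (.inl 0) * ∑ i, b i * v (.inr i) := by
    rw [Finset.mul_sum]
    exact Finset.sum_congr rfl fun i _ => by ring
  rw [hcross]
  ring

lemma exists_pos_eventually_mul_sum_sq_le_borderedMatrix {D : Matrix ι ι ℝ} (hD : D.PosDef)
    (b : ι → ℝ) :
    ∃ δ, 0 < δ ∧ ∀ᶠ a in atTop, ∀ v, δ * ∑ i, v i ^ 2 ≤ v ⬝ᵥ borderedMatrix a b D *ᵥ v := by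
  obtain ⟨c, hc, hD⟩ := hD.exists_pos_mul_sum_sq_le
  refine ⟨c / 2, by positivity, ?_⟩
  filter_upwards [eventually_ge_atTop (c / 2 + 2 * (∑ j, b j ^ 2) / c)] with a ha v
  rw [dotProduct_borderedMatrix_mulVec, Fintype.sum_sum_type, Fin.sum_univ_one]
  set x := v (.inl 0)
  set y : ι → ℝ := fun j => v (.inr j)
  set K := ∑ j, b j ^ 2
  set S := ∑ j, y j ^ 2
  have hK : 0 ≤ K := Finset.sum_nonneg fun j _ => sq_nonneg _
  have hS : 0 ≤ S := Finset.sum_nonneg fun j _ => sq_nonneg _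
  have hCS : (b ⬝ᵥ y) ^ 2 ≤ K * S := Finset.sum_mul_sq_le_sq_mul_sq _ _ _
  -- AM-GM: `(2x (b ⬝ᵥ y))² ≤ 4Kx²S = 4 (2Kx²/c) (cS/2) ≤ (2Kx²/c + cS/2)²`
  have hprod : 2 * K / c * x ^ 2 * (c / 2 * S) = K * S * x ^ 2 := by field_simp
  have hsq : (2 * x * (b ⬝ᵥ y)) ^ 2 ≤ (2 * K / c * x ^ 2 + c / 2 * S) ^ 2 := by
    nlinarith [sq_nonneg (2 * K / c * x ^ 2 - c / 2 * S),
      mul_le_mul_of_nonneg_left hCS (sq_nonneg x)]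
  have hxq := (abs_le_of_sq_le_sq' hsq (by positivity)).1
  nlinarith [mul_le_mul_of_nonneg_right ha (sq_nonneg x), hD y]

noncomputable def thetaTerm (m : ℕ) (σ : Matrix ι ι ℂ) (z : ι → ℂ) : ℂ :=
  cexp (π * I * m * (z ⬝ᵥ σ *ᵥ z))

lemma norm_thetaTerm_ofReal (m : ℕ) (σ : Matrix ι ι ℂ) (y : ι → ℝ) :
    ‖thetaTerm m σ fun i => (y i : ℂ)‖ = rexp (-(π * m * (y ⬝ᵥ σ.map im *ᵥ y))) := by
  have him : ((fun i => (y i : ℂ)) ⬝ᵥ σ *ᵥ fun i => (y i : ℂ)).im = y ⬝ᵥ σ.map im *ᵥ y := by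
    simp [dotProduct, mulVec, im_sum]
  rw [thetaTerm, norm_exp, ← him]
  simp [mul_re, mul_im]

lemma tendsto_thetaTerm_borderedMatrix {m : ℕ} (hm : 0 < m) (w : ι → ℂ) (τ : Matrix ι ι ℂ)
    (y : Fin 1 ⊕ ι → ℝ) :
    Tendsto (fun t : ℝ => thetaTerm m (borderedMatrix (t * I) w τ) fun i => (y i : ℂ)) atTop
      (𝓝 (if y (.inl 0) = 0 then thetaTerm m τ (fun j => (y (.inr j) : ℂ)) else 0)) := by
  set x := y (.inl 0)
  set z : ι → ℂ := fun j => (y (.inr j) : ℂ)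
  have hsplit : ∀ t : ℝ, thetaTerm m (borderedMatrix (t * I) w τ) (fun i => (y i : ℂ)) =
      rexp (-(π * m * x ^ 2 * t)) * cexp (π * I * m * (2 * x * (w ⬝ᵥ z) + z ⬝ᵥ τ *ᵥ z)) := by
    intro t
    rw [thetaTerm, dotProduct_borderedMatrix_mulVec, ofReal_exp, ← Complex.exp_add]
    congr 1
    push_cast
    linear_combination (π * m * x ^ 2 * t : ℂ) * I_sq
  simp_rw [hsplit]
  split_ifs with hx
  · simp [hx, thetaTerm, z]
  · have hc : 0 < π * m * x ^ 2 := by positivity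
    rw [← zero_mul (cexp _)]
    refine Tendsto.mul_const _ ?_
    rw [← ofReal_zero]
    exact continuous_ofReal.continuousAt.tendsto.comp
      (tendsto_exp_atBot.comp (tendsto_neg_atTop_atBot.comp (tendsto_id.const_mul_atTop hc)))

end

lemma thetaConst_eq_tsum_thetaTerm {ι : Type} [Fintype ι] (m : ℕ) (ε : ι → ℝ)
    (σ : Matrix ι ι ℂ) :
    thetaConst ι m ε σ = ∑' n : ι → ℤ, thetaTerm m σ fun i => ((n i + ε i : ℝ) : ℂ) := by
  simp only [thetaConst, thetaTerm, ofReal_add, ofReal_intCast]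

theorem tendsto_thetaConst_borderedMatrix {ι : Type} [Fintype ι] {m : ℕ} (hm : 0 < m)
    (e₁ : ℝ) (e₂ : ι → ℝ) (τ : Matrix ι ι ℂ) (hτ : (τ.map im).PosDef) (w : ι → ℂ) :
    Tendsto (fun t : ℝ => thetaConst (Fin 1 ⊕ ι) m (Sum.elim (fun _ => e₁) e₂)
        (borderedMatrix (t * I) w τ)) atTop
      (𝓝 (∑' n : Fin 1 ⊕ ι → ℤ, if (n (.inl 0) : ℝ) + e₁ = 0 then
        thetaTerm m τ (fun j => ((n (.inr j) + e₂ j : ℝ) : ℂ)) else 0)) := by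
  obtain ⟨δ, hδ, hcoer⟩ := exists_pos_eventually_mul_sum_sq_le_borderedMatrix hτ fun j => (w j).im
  simp_rw [thetaConst_eq_tsum_thetaTerm]
  refine tendsto_tsum_of_dominated_convergence
    (summable_exp_neg_mul_sum_add_sq (by positivity : 0 < π * m * δ) (Sum.elim (fun _ => e₁) e₂))
    (fun n => tendsto_thetaTerm_borderedMatrix hm w τ _) ?_
  filter_upwards [hcoer] with t ht n
  rw [norm_thetaTerm_ofReal, borderedMatrix_map, mul_I_im, ofReal_re, exp_le_exp,
    neg_le_neg_iff, mul_assoc]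
  exact mul_le_mul_of_nonneg_left (ht _) (by positivity)

theorem thetaConst_degeneration_general (g m : ℕ) (hm : 1 ≤ m)
    (ε₁ : ℝ) (hε₁0 : 0 ≤ ε₁) (hε₁1 : ε₁ < 1)
    (ε₂ : Fin (g - 1) → ℝ)
    (τ : Matrix (Fin (g - 1)) (Fin (g - 1)) ℂ)
    (hpos : (Matrix.of fun i j => (τ i j).im).PosDef)
    (w : Fin (g - 1) → ℂ) :
    Filter.Tendsto
      (fun t : ℝ =>
        thetaConst (Fin 1 ⊕ Fin (g - 1)) m (Sum.elim (fun _ => ε₁) ε₂)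
          (degenMatrix g τ w t))
      Filter.atTop
      (nhds (if ε₁ = 0 then thetaConst (Fin (g - 1)) m ε₂ τ else 0)) := by
  have h := tendsto_thetaConst_borderedMatrix hm ε₁ ε₂ τ hpos w
  rwa [tsum_ite_inl_add_eq_zero hε₁0 hε₁1 fun v => thetaTerm m τ fun j => ((v j + ε₂ j : ℝ) : ℂ),
    ← thetaConst_eq_tsum_thetaTerm] at h

/-- Degeneration of theta constants: as `t → +∞`, the order-`m` theta constant of the
block matrix `σ(t) = (it, wᵀ; w, τ)` with characteristic `(ε₁, ε₂)` tends to
`Θ[ε₂](τ)` if `ε₁ = 0`, and to `0` if `ε₁ ≠ 0`. -/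
theorem thetaConst_degeneration (g m : ℕ) (hg : 2 ≤ g) (hm : 1 ≤ m)
    (ε₁ : ℝ) (hε₁0 : 0 ≤ ε₁) (hε₁1 : ε₁ < 1) (hε₁m : ∃ a : ℤ, (m : ℝ) * ε₁ = a)
    (ε₂ : Fin (g - 1) → ℝ) (hε₂0 : ∀ i, 0 ≤ ε₂ i) (hε₂1 : ∀ i, ε₂ i < 1)
    (hε₂m : ∀ i, ∃ a : ℤ, (m : ℝ) * ε₂ i = a)
    (τ : Matrix (Fin (g - 1)) (Fin (g - 1)) ℂ) (hsym : τ.IsSymm)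
    (hpos : (Matrix.of fun i j => (τ i j).im).PosDef)
    (w : Fin (g - 1) → ℂ) :
    Filter.Tendsto
      (fun t : ℝ =>
        thetaConst (Fin 1 ⊕ Fin (g - 1)) m (Sum.elim (fun _ => ε₁) ε₂)
          (degenMatrix g τ w t))
      Filter.atTop
      (nhds (if ε₁ = 0 then thetaConst (Fin (g - 1)) m ε₂ τ else 0)) :=
  thetaConst_degeneration_general g m hm ε₁ hε₁0 hε₁1 ε₂ τ hpos w
end
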